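/- Let d ≥ 1 and b ∈ (0,1). For all measurable functions f, g : ℝ^d → ℂ one has ‖𝒟^b(f g)‖_{L²(ℝ^d)} ≤ ‖f · 𝒟^b g‖_{L²(ℝ^d)} + ‖g · 𝒟^b f‖_{L²(ℝ^d)} (as an inequality in the extended reals). -/

import Mathlib

/-! Writing `f x * g x - f y * g y = f x * (g x - g y) + g y * (f x - f y)`, Minkowski's inequality
in `y` bounds `𝒟^b (f g) x` by `‖f x‖ * 𝒟^b g x` plus the `L²(dy)` norm of
`g y * (f x - f y) / ‖x - y‖ ^ (d/2 + b)`. Minkowski's inequality in `x` leaves the `L²(dx)` norm of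
this mixed term, and by Tonelli and the symmetry of the kernel in `x` and `y` its square is
`∫ ‖g y‖² (𝒟^b f y)² dy`. Only the symmetry and measurability of the kernel `‖x - y‖ ^ (d + 2b)`
enter, so the inequality holds for any symmetric measurable kernel on an s-finite measure space. -/

open MeasureTheory Complex ENNReal NNReal

noncomputable section

/-- Stein derivative of order `b` on `ℝ^d`:
`𝒟^b g(x) = (∫ |g(x)-g(y)|²/|x-y|^{d+2b} dy)^{1/2}`, valued in `ℝ≥0∞`. -/
def steinDerivE (d : ℕ) (b : ℝ) (g : EuclideanSpace ℝ (Fin d) → ℂ)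
    (x : EuclideanSpace ℝ (Fin d)) : ℝ≥0∞ :=
  (∫⁻ y : EuclideanSpace ℝ (Fin d),
      ENNReal.ofReal (‖g x - g y‖ ^ 2 / ‖x - y‖ ^ ((d : ℝ) + 2 * b))) ^ ((1:ℝ)/2)

/-- `L²(ℝ^d)` norm of the Stein derivative-type quantity (in the extended reals). -/
def steinE_L2 (d : ℕ) (F : EuclideanSpace ℝ (Fin d) → ℝ≥0∞) : ℝ≥0∞ :=
  (∫⁻ x : EuclideanSpace ℝ (Fin d), F x ^ (2:ℝ)) ^ ((1:ℝ)/2)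

open Function

lemma eLpNorm_two_rpow_two {α : Type*} {m : MeasurableSpace α} {μ : Measure α} (F : α → ℝ≥0∞) :
    eLpNorm F 2 μ ^ (2 : ℝ) = ∫⁻ x, F x ^ (2 : ℝ) ∂μ := by
  simpa using eLpNorm_nnreal_pow_eq_lintegral (μ := μ) (f := F) (p := 2) two_ne_zero

lemma Measurable.eLpNorm_prod_right {α β : Type*} [MeasurableSpace α] [MeasurableSpace β]
    {ν : Measure β} [SFinite ν] {F : α → β → ℝ≥0∞} (hF : Measurable (uncurry F)) {p : ℝ≥0∞}
    (hp : p ≠ ∞) : Measurable fun x => eLpNorm (F x) p ν := by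
  rcases eq_or_ne p 0 with rfl | hp₀
  · simp only [eLpNorm_exponent_zero, measurable_const]
  simp_rw [eLpNorm_eq_lintegral_rpow_enorm_toReal hp₀ hp, enorm_eq_self]
  exact (hF.pow_const _).lintegral_prod_right'.pow_const _

section

variable {α E : Type*} {k : α → α → ℝ≥0∞}

def diffQuot [SeminormedAddGroup E] (k : α → α → ℝ≥0∞) (g : α → E) (x y : α) : ℝ≥0∞ :=
  ‖g x - g y‖ₑ / k x y ^ (1 / 2 : ℝ)

def steinDeriv [SeminormedAddGroup E] [MeasurableSpace α] (μ : Measure α) (k : α → α → ℝ≥0∞)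
    (g : α → E) (x : α) : ℝ≥0∞ :=
  eLpNorm (diffQuot k g x) 2 μ

def mixedTerm [SeminormedAddGroup E] [MeasurableSpace α] (μ : Measure α) (k : α → α → ℝ≥0∞)
    (f g : α → E) (x : α) : ℝ≥0∞ :=
  eLpNorm (fun y => ‖g y‖ₑ * diffQuot k f x y) 2 μ

lemma diffQuot_comm [SeminormedAddGroup E] (hk_symm : ∀ x y, k x y = k y x) (g : α → E)
    (x y : α) : diffQuot k g x y = diffQuot k g y x := by
  rw [diffQuot, diffQuot, enorm_sub_rev, hk_symm]

lemma diffQuot_mul_le [NormedRing E] (k : α → α → ℝ≥0∞) (f g : α → E) (x y : α) :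
    diffQuot k (f * g) x y ≤ ‖f x‖ₑ * diffQuot k g x y + ‖g y‖ₑ * diffQuot k f x y := by
  have hnum : ‖f x * g x - f y * g y‖ₑ ≤ ‖f x‖ₑ * ‖g x - g y‖ₑ + ‖g y‖ₑ * ‖f x - f y‖ₑ := by
    rw [show f x * g x - f y * g y = f x * (g x - g y) + (f x - f y) * g y by noncomm_ring]
    refine (enorm_add_le _ _).trans (add_le_add ?_ ?_)
    · simpa only [enorm_eq_nnnorm, ← ENNReal.coe_mul, ENNReal.coe_le_coe] using nnnorm_mul_le _ _
    · simpa only [enorm_eq_nnnorm, ← ENNReal.coe_mul, ENNReal.coe_le_coe, mul_comm ‖g y‖₊]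
        using nnnorm_mul_le _ _
  simp only [diffQuot, Pi.mul_apply, ← mul_div_assoc, ENNReal.div_add_div_same]
  exact ENNReal.div_le_div_right hnum _

variable [MeasurableSpace α] {μ : Measure α}
  [NormedRing E] [MeasurableSpace E] [OpensMeasurableSpace E] [MeasurableSub₂ E]

lemma measurable_diffQuot (hk : Measurable (uncurry k)) {g : α → E} (hg : Measurable g) :
    Measurable (uncurry (diffQuot k g)) :=
  ((hg.comp measurable_fst).sub (hg.comp measurable_snd)).enorm.div (hk.pow_const _)

lemma measurable_steinDeriv [SFinite μ] (hk : Measurable (uncurry k)) {g : α → E}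
    (hg : Measurable g) : Measurable (steinDeriv μ k g) :=
  (measurable_diffQuot hk hg).eLpNorm_prod_right ofNat_ne_top

lemma measurable_mixedTerm [SFinite μ] (hk : Measurable (uncurry k)) {f g : α → E}
    (hf : Measurable f) (hg : Measurable g) : Measurable (mixedTerm μ k f g) :=
  ((hg.comp measurable_snd).enorm.mul (measurable_diffQuot hk hf)).eLpNorm_prod_right ofNat_ne_top

lemma steinDeriv_mul_le [SFinite μ] (hk : Measurable (uncurry k)) {f g : α → E}
    (hf : Measurable f) (hg : Measurable g) (x : α) :
    steinDeriv μ k (f * g) x ≤ ‖f x‖ₑ * steinDeriv μ k g x + mixedTerm μ k f g x := by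
  have hfx : Measurable (diffQuot k f x) := (measurable_diffQuot hk hf).comp measurable_prodMk_left
  have hgx : Measurable (diffQuot k g x) := (measurable_diffQuot hk hg).comp measurable_prodMk_left
  calc steinDeriv μ k (f * g) x
      ≤ eLpNorm ((fun y => ‖f x‖ₑ * diffQuot k g x y) + fun y => ‖g y‖ₑ * diffQuot k f x y) 2 μ :=
        eLpNorm_mono_enorm fun y => by
          simpa only [enorm_eq_self, Pi.add_apply] using diffQuot_mul_le k f g x y
    _ ≤ eLpNorm (fun y => ‖f x‖ₑ * diffQuot k g x y) 2 μ + mixedTerm μ k f g x :=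
        eLpNorm_add_le (measurable_const.mul hgx).aestronglyMeasurable
          (hg.enorm.mul hfx).aestronglyMeasurable one_le_two
    _ ≤ ‖f x‖ₑ * steinDeriv μ k g x + mixedTerm μ k f g x := by
        gcongr
        exact eLpNorm_le_nnreal_smul_eLpNorm_of_ae_le_mul' (c := ‖f x‖₊)
          (ae_of_all _ fun y => by simp [enorm_eq_nnnorm]) 2

lemma eLpNorm_mixedTerm [SFinite μ] (hk : Measurable (uncurry k))
    (hk_symm : ∀ x y, k x y = k y x) {f g : α → E} (hf : Measurable f) (hg : Measurable g) :
    eLpNorm (mixedTerm μ k f g) 2 μ = eLpNorm (fun x => ‖g x‖ₑ * steinDeriv μ k f x) 2 μ := by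
  refine (ENNReal.rpow_left_injective two_ne_zero) ?_
  simp only [eLpNorm_two_rpow_two, mixedTerm, steinDeriv]
  calc ∫⁻ x, ∫⁻ y, (‖g y‖ₑ * diffQuot k f x y) ^ (2 : ℝ) ∂μ ∂μ
      = ∫⁻ y, ∫⁻ x, (‖g y‖ₑ * diffQuot k f x y) ^ (2 : ℝ) ∂μ ∂μ :=
        lintegral_lintegral_swap
          (((hg.comp measurable_snd).enorm.mul (measurable_diffQuot hk hf)).pow_const
            _).aemeasurable
    _ = ∫⁻ y, (‖g y‖ₑ * eLpNorm (diffQuot k f y) 2 μ) ^ (2 : ℝ) ∂μ := by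
        refine lintegral_congr fun y => ?_
        simp only [ENNReal.mul_rpow_of_nonneg _ _ zero_le_two, eLpNorm_two_rpow_two,
          diffQuot_comm hk_symm f _ y]
        exact lintegral_const_mul' _ _ (ENNReal.rpow_ne_top_of_nonneg zero_le_two enorm_ne_top)

theorem eLpNorm_steinDeriv_mul_le [SFinite μ] (hk : Measurable (uncurry k))
    (hk_symm : ∀ x y, k x y = k y x) {f g : α → E} (hf : Measurable f) (hg : Measurable g) :
    eLpNorm (steinDeriv μ k (f * g)) 2 μ ≤
      eLpNorm (fun x => ‖f x‖ₑ * steinDeriv μ k g x) 2 μ +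
        eLpNorm (fun x => ‖g x‖ₑ * steinDeriv μ k f x) 2 μ := by
  calc eLpNorm (steinDeriv μ k (f * g)) 2 μ
      ≤ eLpNorm ((fun x => ‖f x‖ₑ * steinDeriv μ k g x) + mixedTerm μ k f g) 2 μ :=
        eLpNorm_mono_enorm fun x => by
          simpa only [enorm_eq_self, Pi.add_apply] using steinDeriv_mul_le hk hf hg x
    _ ≤ eLpNorm (fun x => ‖f x‖ₑ * steinDeriv μ k g x) 2 μ + eLpNorm (mixedTerm μ k f g) 2 μ :=
        eLpNorm_add_le (hf.enorm.mul (measurable_steinDeriv hk hg)).aestronglyMeasurable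
          (measurable_mixedTerm hk hf hg).aestronglyMeasurable one_le_two
    _ = _ := by rw [eLpNorm_mixedTerm hk hk_symm hf hg]

end

lemma steinE_L2_eq_eLpNorm (d : ℕ) (F : EuclideanSpace ℝ (Fin d) → ℝ≥0∞) :
    steinE_L2 d F = eLpNorm F 2 volume := by
  simp [steinE_L2, eLpNorm_eq_lintegral_rpow_enorm_toReal two_ne_zero ofNat_ne_top]

lemma steinDerivE_eq_steinDeriv (d : ℕ) (b : ℝ) (g : EuclideanSpace ℝ (Fin d) → ℂ) :
    steinDerivE d b g =
      steinDeriv volume (fun x y => ENNReal.ofReal (‖x - y‖ ^ ((d : ℝ) + 2 * b))) g := by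
  ext x
  simp only [steinDerivE, steinDeriv, enorm_eq_self, toReal_ofNat,
    eLpNorm_eq_lintegral_rpow_enorm_toReal two_ne_zero ofNat_ne_top]
  congr 1
  refine lintegral_congr fun y => ?_
  rcases eq_or_ne y x with rfl | hyx
  · simp [diffQuot]
  have hpos : 0 < ‖x - y‖ ^ ((d : ℝ) + 2 * b) :=
    Real.rpow_pos_of_pos (by simpa [sub_eq_zero] using hyx.symm) _
  rw [diffQuot, ENNReal.div_rpow_of_nonneg _ _ zero_le_two, ← ENNReal.rpow_mul,
    ENNReal.ofReal_div_of_pos hpos, ENNReal.ofReal_pow (norm_nonneg _), ofReal_norm]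
  norm_num

theorem stein_deriv_leibniz_general (d : ℕ) (b : ℝ)
    (f g : EuclideanSpace ℝ (Fin d) → ℂ) (hf : Measurable f) (hg : Measurable g) :
    steinE_L2 d (steinDerivE d b (fun z => f z * g z)) ≤
      steinE_L2 d (fun x => (‖f x‖₊ : ℝ≥0∞) * steinDerivE d b g x) +
        steinE_L2 d (fun x => (‖g x‖₊ : ℝ≥0∞) * steinDerivE d b f x) := by
  have hk : Measurable (uncurry fun x y : EuclideanSpace ℝ (Fin d) =>
      ENNReal.ofReal (‖x - y‖ ^ ((d : ℝ) + 2 * b))) := by fun_prop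
  have hk_symm : ∀ x y : EuclideanSpace ℝ (Fin d),
      ENNReal.ofReal (‖x - y‖ ^ ((d : ℝ) + 2 * b)) = ENNReal.ofReal (‖y - x‖ ^ ((d : ℝ) + 2 * b)) :=
    fun x y => by rw [norm_sub_rev]
  simp only [steinE_L2_eq_eLpNorm, steinDerivE_eq_steinDeriv, ← enorm_eq_nnnorm]
  exact eLpNorm_steinDeriv_mul_le hk hk_symm hf hg

/-- product estimate \eqref{Leib}: for `d ≥ 1`, `b ∈ (0,1)` and measurable
`f, g : ℝ^d → ℂ`, `‖𝒟^b(fg)‖_{L²} ≤ ‖f 𝒟^b g‖_{L²} + ‖g 𝒟^b f‖_{L²}` in `ℝ≥0∞`. -/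
theorem stein_deriv_leibniz (d : ℕ) (hd : 1 ≤ d) (b : ℝ) (hb : b ∈ Set.Ioo (0:ℝ) 1)
    (f g : EuclideanSpace ℝ (Fin d) → ℂ) (hf : Measurable f) (hg : Measurable g) :
    steinE_L2 d (steinDerivE d b (fun z => f z * g z)) ≤
      steinE_L2 d (fun x => (‖f x‖₊ : ℝ≥0∞) * steinDerivE d b g x) +
        steinE_L2 d (fun x => (‖g x‖₊ : ℝ≥0∞) * steinDerivE d b f x) :=
  stein_deriv_leibniz_general d b f g hf hg
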